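/- Let z = e^{iπ/6}, and let A₀, A₁, B₀, B₁ be the specific 3×3 matrices A₀ = B₀ = cyclic shift X, A₁ = z²D₀X, B₁ = z²D₀X*, and |ψ₃⟩ = (1/√10)((1−z⁴)|00⟩ + 2|12⟩ + (1+z²)|21⟩). Then ⟨ψ₃|𝓑₃|ψ₃⟩ = 6, where 𝓑₃ = ∑_{i=1}^{2} A₀ⁱ⊗B₀⁻ⁱ + A₀ⁱ⊗B₁ⁱ + A₁ⁱ⊗B₀⁻ⁱ + ω⁻ⁱA₁ⁱ⊗B₁ⁱ with ω = e^{2πi/3}. -/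

import Mathlib

open Matrix Finset
open scoped Kronecker

noncomputable def z3 : ℂ := Complex.exp (Real.pi * Complex.I / 6)
noncomputable def ω3 : ℂ := Complex.exp (2 * Real.pi * Complex.I / 3)

/-- The 3×3 cyclic shift `X e_i = e_{(i+1) mod 3}`. -/
noncomputable def X3 : Matrix (Fin 3) (Fin 3) ℂ := !![0, 0, 1; 1, 0, 0; 0, 1, 0]
noncomputable def D0 : Matrix (Fin 3) (Fin 3) ℂ := !![-1, 0, 0; 0, 1, 0; 0, 0, 1]

noncomputable def A0 : Matrix (Fin 3) (Fin 3) ℂ := X3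
noncomputable def A1 : Matrix (Fin 3) (Fin 3) ℂ := z3 ^ 2 • (D0 * X3)
noncomputable def B0 : Matrix (Fin 3) (Fin 3) ℂ := X3
noncomputable def B1 : Matrix (Fin 3) (Fin 3) ℂ := z3 ^ 2 • (D0 * X3ᴴ)

/-- The bias operator `𝓑₃ = ∑_{i=1}^{2} A₀ⁱ⊗B₀⁻ⁱ + A₀ⁱ⊗B₁ⁱ + A₁ⁱ⊗B₀⁻ⁱ + ω⁻ⁱA₁ⁱ⊗B₁ⁱ`. -/
noncomputable def bias3 : Matrix (Fin 3 × Fin 3) (Fin 3 × Fin 3) ℂ :=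
  ∑ i ∈ Finset.Icc (1 : ℕ) 2,
    ((A0 ^ i) ⊗ₖ ((B0⁻¹) ^ i) + (A0 ^ i) ⊗ₖ (B1 ^ i) + (A1 ^ i) ⊗ₖ ((B0⁻¹) ^ i) +
      (ω3⁻¹) ^ i • ((A1 ^ i) ⊗ₖ (B1 ^ i)))

/-- The state `|ψ₃⟩ = (1/√10)((1−z⁴)|00⟩ + 2|12⟩ + (1+z²)|21⟩)`. -/
noncomputable def ψ3 : Fin 3 × Fin 3 → ℂ := fun p =>
  (1 / (Real.sqrt 10 : ℂ)) *
    (if p = (0, 0) then 1 - z3 ^ 4 else if p = (1, 2) then 2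
     else if p = (2, 1) then 1 + z3 ^ 2 else 0)

lemma hz : z3 = (Real.sqrt 3 + Complex.I) / 2 := by
  have : (Real.pi * Complex.I / 6 : ℂ) = ((Real.pi / 6 : ℝ) : ℂ) * Complex.I := by
    push_cast; ring
  rw [z3, this, Complex.exp_mul_I, ← Complex.ofReal_cos, ← Complex.ofReal_sin,
    Real.cos_pi_div_six, Real.sin_pi_div_six]
  push_cast; ring

lemma homega : ω3 = z3 ^ 4 := by
  rw [z3, ω3, ← Complex.exp_nat_mul]; ring_nf

lemma hs3 : ((Real.sqrt 3 : ℝ) : ℂ) ^ 2 = 3 := by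
  norm_cast; exact Real.sq_sqrt (by norm_num)

lemma hw2 : z3 ^ 2 = (1 + Real.sqrt 3 * Complex.I) / 2 := by
  rw [hz]; linear_combination hs3 / 4 + Complex.I_sq / 4

lemma hw4 : z3 ^ 4 = (-1 + Real.sqrt 3 * Complex.I) / 2 := by
  rw [show z3 ^ 4 = (z3 ^ 2) ^ 2 by ring, hw2]
  linear_combination (Complex.I ^ 2 / 4) * hs3 + (3 / 4) * Complex.I_sq

lemma homegainv : ω3⁻¹ = (-1 - Real.sqrt 3 * Complex.I) / 2 := by
  apply inv_eq_of_mul_eq_one_right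
  rw [homega, hw4]
  linear_combination (-Complex.I ^ 2 / 4) * hs3 + (-3 / 4) * Complex.I_sq

lemma hX3inv : (!![0, 0, 1; 1, 0, 0; 0, 1, 0] : Matrix (Fin 3) (Fin 3) ℂ)⁻¹ =
    !![0, 1, 0; 0, 0, 1; 1, 0, 0] := by
  apply Matrix.inv_eq_right_inv
  rw [Matrix.mul_fin_three, Matrix.one_fin_three]; norm_num

lemma hX3H : (!![0, 0, 1; 1, 0, 0; 0, 1, 0] : Matrix (Fin 3) (Fin 3) ℂ)ᴴ =
    !![0, 1, 0; 0, 0, 1; 1, 0, 0] := by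
  ext i j
  fin_cases i <;> fin_cases j <;>
    simp [Matrix.conjTranspose_apply, Matrix.vecHead, Matrix.vecTail]

lemma hzz : z3 * z3 = (1 + Real.sqrt 3 * Complex.I) / 2 := by
  rw [← pow_two]; exact hw2

lemma hcz : (starRingEnd ℂ) z3 = (Real.sqrt 3 - Complex.I) / 2 := by
  rw [hz]; rw [map_div₀, map_add, Complex.conj_ofReal, Complex.conj_I, map_ofNat]; ring

set_option maxHeartbeats 3000000 in
set_option maxRecDepth 100000 in
theorem stmt_18 : dotProduct (star ψ3) (bias3.mulVec ψ3) = 6 := by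
  have ht : ((Real.sqrt 10 : ℝ) : ℂ) ^ 2 = 10 := by norm_cast; exact Real.sq_sqrt (by norm_num)
  have ht0 : ((Real.sqrt 10 : ℝ) : ℂ) ≠ 0 :=
    Complex.ofReal_ne_zero.mpr (ne_of_gt (Real.sqrt_pos.mpr (by norm_num)))
  simp only [bias3, show Finset.Icc (1 : ℕ) 2 = {1, 2} by decide,
    Finset.sum_pair (by norm_num : (1:ℕ) ≠ 2), pow_one,
    A0, A1, B0, B1, X3, D0, hX3inv, hX3H, homegainv, hw2]
  simp only [dotProduct, Matrix.mulVec, Fintype.sum_prod_type, Fin.sum_univ_succ,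
    Fin.sum_univ_zero, ψ3, Pi.star_apply, Matrix.add_apply, Matrix.smul_apply,
    Matrix.kroneckerMap_apply, pow_two, Matrix.mul_apply, Matrix.cons_val', Matrix.cons_val_zero,
    Matrix.cons_val_one, Matrix.head_cons, Matrix.empty_val', Matrix.cons_val_fin_one,
    Matrix.head_fin_const, smul_eq_mul, Complex.star_def, map_sub, map_add, _root_.map_one, map_pow,
    _root_.map_mul, map_ofNat, hw4, hzz, hcz]
  norm_num [Prod.ext_iff, Fin.ext_iff, Matrix.cons_val_two, Matrix.vecHead, Matrix.vecTail, Complex.conj_ofNat]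
  rw [show ((Real.sqrt 10 : ℝ) : ℂ)⁻¹ = ((Real.sqrt 10 : ℝ) : ℂ) / 10 by
    field_simp; linear_combination (-1 : ℂ) * ht]
  ring_nf
  linear_combination ((4473/25600) * 1 + (-3/40) * (Real.sqrt 3:ℂ)*Complex.I + (-121/1280) * (Real.sqrt 3:ℂ)^2*Complex.I^2 + (1/3200) * (Real.sqrt 3:ℂ)^3*Complex.I^3 + (287/12800) * (Real.sqrt 3:ℂ)^4*Complex.I^4 + (3/320) * (Real.sqrt 3:ℂ)^5*Complex.I^5 + (3/1280) * (Real.sqrt 3:ℂ)^6*Complex.I^6 + (1/3200) * (Real.sqrt 3:ℂ)^7*Complex.I^7 + (1/25600) * (Real.sqrt 3:ℂ)^8*Complex.I^8) * ht + ((-121/128) * Complex.I^2 + (1/320) * (Real.sqrt 3:ℂ)*Complex.I^3 + (287/1280) * (Real.sqrt 3:ℂ)^2*Complex.I^4 + (3/32) * (Real.sqrt 3:ℂ)^3*Complex.I^5 + (3/128) * (Real.sqrt 3:ℂ)^4*Complex.I^6 + (1/320) * (Real.sqrt 3:ℂ)^5*Complex.I^7 + (1/2560) * (Real.sqrt 3:ℂ)^6*Complex.I^8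 + (861/1280) * Complex.I^4 + (9/32) * (Real.sqrt 3:ℂ)*Complex.I^5 + (9/128) * (Real.sqrt 3:ℂ)^2*Complex.I^6 + (3/320) * (Real.sqrt 3:ℂ)^3*Complex.I^7 + (3/2560) * (Real.sqrt 3:ℂ)^4*Complex.I^8 + (27/128) * Complex.I^6 + (9/320) * (Real.sqrt 3:ℂ)*Complex.I^7 + (9/2560) * (Real.sqrt 3:ℂ)^2*Complex.I^8 + (27/2560) * Complex.I^8) * hs3 + ((-10887/2560) * 1 + (-3/4) * (Real.sqrt 3:ℂ)*Complex.I + (3627/2560) * Complex.I^2 + (243/320) * (Real.sqrt 3:ℂ)*Complex.I^3 + (1539/2560) * Complex.I^4 + (27/320) * (Real.sqrt 3:ℂ)*Complex.I^5 + (81/2560) * Complex.I^6) * Complex.I_sq
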